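/- Completeness of the Folk characterization for weak SPEs: if P_{α*}(hv) ≠ ∅ for every history hv of the initialized game (G, v_0), then for every play ρ ∈ P_{α*}(v_0) there exists a weak SPE of (G, v_0) whose outcome is exactly ρ. -/

import Mathlib

open Classical

noncomputable section

/-- A multiplayer turn-based quantitative game on a directed graph:
`owner` assigns each vertex to a player, `E` is the edge relation (every
vertex has a successor), and `cost i` is player `i`'s cost function on
infinite sequences of vertices (to be minimized), valued in `ℝ ∪ {±∞}`. -/
structure QGame (P V : Type) where
  owner : V → P
  E : V → V → Prop
  succ_exists : ∀ v, ∃ v', E v v'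
  cost : P → (ℕ → V) → EReal

namespace QGame

variable {P V : Type}

/-- An infinite play of the game: consecutive vertices are joined by edges. -/
def IsPlay (G : QGame P V) (ρ : ℕ → V) : Prop := ∀ n, G.E (ρ n) (ρ (n + 1))

/-- Concatenation `hρ` of a finite history `h` with an infinite play `ρ`. -/
def prepend (h : List V) (ρ : ℕ → V) : ℕ → V := fun n =>
  if hn : n < h.length then h.get ⟨n, hn⟩ else ρ (n - h.length)

/-- The prefix of length `n` of a play, as a list. -/
def playPrefix (ρ : ℕ → V) (n : ℕ) : List V := List.ofFn fun k : Fin n => ρ k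

/-- `hv` is a history of the game initialized at `v0`: here `h` is the strict
past and `v` the current vertex; the sequence `h ++ [v]` starts at `v0` and
follows edges. -/
def IsHist (G : QGame P V) (v0 : V) (h : List V) (v : V) : Prop :=
  (h ++ [v]).head? = some v0 ∧ List.Chain' G.E (h ++ [v])

/-- A (turn-based) strategy profile: given the past history and the current
vertex, choose the next vertex.  An individual strategy of player `i` is of
the same type; only its values at vertices owned by `i` matter. -/
abbrev Strat (P V : Type) := List V → V → V

/-- A profile/strategy is valid if it always follows edges. -/
def Valid (G : QGame P V) (σ : Strat P V) : Prop := ∀ h v, G.E v (σ h v)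

/-- History/current-vertex pair produced after `n` steps of `σ` from `v`. -/
def outcomeAux (σ : Strat P V) (v : V) : ℕ → List V × V
  | 0 => ([], v)
  | n + 1 =>
      let p := outcomeAux σ v n
      (p.1 ++ [p.2], σ p.1 p.2)

/-- The outcome play of profile `σ` from initial vertex `v`. -/
def outcome (σ : Strat P V) (v : V) (n : ℕ) : V := (outcomeAux σ v n).2

/-- The profile where player `i` unilaterally deviates to strategy `τ`
from the profile `σ`. -/
def devProf (G : QGame P V) (σ τ : Strat P V) (i : P) : Strat P V :=
  fun h v => if G.owner v = i then τ h v else σ h v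

/-- The set of deviation steps of `τ` from `σ` (for player `i`, from `v`):
positions `n` along the outcome of the deviated profile where the current
vertex belongs to player `i` and `τ` disagrees with `σ`. -/
def devSteps (G : QGame P V) (σ τ : Strat P V) (i : P) (v : V) : Set ℕ :=
  {n | G.owner (outcome (G.devProf σ τ i) v n) = i ∧
       σ (outcomeAux (G.devProf σ τ i) v n).1 (outcome (G.devProf σ τ i) v n) ≠
       τ (outcomeAux (G.devProf σ τ i) v n).1 (outcome (G.devProf σ τ i) v n)}

/-- `τ` is finitely deviating from `σ`. -/
def FinDev (G : QGame P V) (σ τ : Strat P V) (i : P) (v : V) : Prop :=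
  (G.devSteps σ τ i v).Finite

/-- `τ` is one-shot deviating from `σ`: its unique deviation step is at the
initial vertex. -/
def OneShotDev (G : QGame P V) (σ τ : Strat P V) (i : P) (v : V) : Prop :=
  G.devSteps σ τ i v = {0}

/-- Nash equilibrium of the profile `σ` from `v`, with respect to a cost
assignment `c` (no player has a profitable unilateral deviation). -/
def IsNEwith (G : QGame P V) (c : P → (ℕ → V) → EReal) (σ : Strat P V) (v : V) : Prop :=
  ∀ i τ, G.Valid τ →
    c i (outcome σ v) ≤ c i (outcome (G.devProf σ τ i) v)

/-- Weak Nash equilibrium: no profitable finitely deviating strategy. -/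
def IsWeakNEwith (G : QGame P V) (c : P → (ℕ → V) → EReal) (σ : Strat P V) (v : V) : Prop :=
  ∀ i τ, G.Valid τ → G.FinDev σ τ i v →
    c i (outcome σ v) ≤ c i (outcome (G.devProf σ τ i) v)

/-- Very weak Nash equilibrium: no profitable one-shot deviating strategy. -/
def IsVeryWeakNEwith (G : QGame P V) (c : P → (ℕ → V) → EReal) (σ : Strat P V) (v : V) : Prop :=
  ∀ i τ, G.Valid τ → G.OneShotDev σ τ i v →
    c i (outcome σ v) ≤ c i (outcome (G.devProf σ τ i) v)

/-- The strategy profile induced by `σ` in the subgame after history `h`. -/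
def subStrat (σ : Strat P V) (h : List V) : Strat P V := fun g v => σ (h ++ g) v

/-- The cost functions of the subgame after history `h`. -/
def subCost (G : QGame P V) (h : List V) : P → (ℕ → V) → EReal :=
  fun i ρ => G.cost i (prepend h ρ)

/-- Subgame perfect equilibrium: Nash equilibrium in every subgame. -/
def IsSPE (G : QGame P V) (v0 : V) (σ : Strat P V) : Prop :=
  ∀ h v, G.IsHist v0 h v → G.IsNEwith (G.subCost h) (subStrat σ h) v

/-- Weak subgame perfect equilibrium: weak NE in every subgame. -/
def IsWeakSPE (G : QGame P V) (v0 : V) (σ : Strat P V) : Prop :=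
  ∀ h v, G.IsHist v0 h v → G.IsWeakNEwith (G.subCost h) (subStrat σ h) v

/-- Very weak subgame perfect equilibrium: very weak NE in every subgame. -/
def IsVeryWeakSPE (G : QGame P V) (v0 : V) (σ : Strat P V) : Prop :=
  ∀ h v, G.IsHist v0 h v → G.IsVeryWeakNEwith (G.subCost h) (subStrat σ h) v

/-- One elimination step: `ρ` (a potential outcome in the subgame after `h`)
is erased if some player `i` controlling a vertex `ρ n` along `hρ` has an
alternative edge to some `v' ≠ ρ (n+1)` such that every play `ρ'` in the
current potential set after the extended history gives `i` a strictly
smaller cost than `hρ`. -/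
def Eset (G : QGame P V) (Pr : List V → V → Set (ℕ → V)) (h : List V) :
    Set (ℕ → V) :=
  {ρ | ∃ n v', G.E (ρ n) v' ∧ v' ≠ ρ (n + 1) ∧
      ∀ ρ' ∈ Pr (h ++ playPrefix ρ (n + 1)) v',
        G.cost (G.owner (ρ n)) (prepend (h ++ playPrefix ρ (n + 1)) ρ') <
          G.cost (G.owner (ρ n)) (prepend h ρ)}

/-- The transfinite sequence `P_α(hv)` of sets of potential outcomes of weak
Nash equilibria in the subgame `(G|_h, v)`: all plays at stage `0`, removal
of `E_α` at successors, intersections at limits. -/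
def Pset (G : QGame P V) (α : Ordinal) : List V → V → Set (ℕ → V) :=
  Ordinal.limitRecOn (motive := fun _ => List V → V → Set (ℕ → V)) α
    (fun _h v => {ρ | G.IsPlay ρ ∧ ρ 0 = v})
    (fun _ Pr => fun h v => Pr h v \ G.Eset Pr h)
    (fun α _ Pr => fun h v => ⋂ (β : Ordinal) (hβ : β < α), Pr β hβ h v)

/-- A sequence of plays converges to `ρ` (in the product topology on `V^ω`
with `V` discrete) iff every finite prefix of `ρ` is eventually a prefix of
the members of the sequence. -/
def Converges (ρs : ℕ → ℕ → V) (ρ : ℕ → V) : Prop :=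
  ∀ m, ∃ N, ∀ n ≥ N, ∀ k ≤ m, ρs n k = ρ k

/-- Upper semicontinuity of a cost function on plays. -/
def USCcost (G : QGame P V) (c : (ℕ → V) → EReal) : Prop :=
  ∀ (ρs : ℕ → ℕ → V) (ρ : ℕ → V), (∀ n, G.IsPlay (ρs n)) → G.IsPlay ρ →
    Converges ρs ρ →
      Filter.limsup (fun n => c (ρs n)) Filter.atTop ≤ c ρ

/-- A strategy (profile) is finite-memory if it is computed by a Moore
machine: a finite set `M` of memory states, updated while reading the
history, determines the move. -/
def FinMem (σ : Strat P V) : Prop :=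
  ∃ (M : Type) (_ : Finite M) (m0 : M) (upd : M → V → M) (act : M → V → V),
    ∀ h v, σ h v = act (h.foldl upd m0) v

/-- Quantitative reachability cost: the least index at which `ρ` visits the
target set `T`, and `+∞` if `T` is never visited. -/
def reachCost (T : Set V) (ρ : ℕ → V) : EReal :=
  if h : ∃ n, ρ n ∈ T then ((Nat.find h : ℕ) : EReal) else ⊤

/-- `G` is a quantitative reachability game with target sets `T i`. -/
def IsReachGame (G : QGame P V) (T : P → Set V) : Prop :=
  ∀ i ρ, G.cost i ρ = reachCost (T i) ρ

/-- The set of players that have not visited their target set along the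
history `h`. -/
def Iset (T : P → Set V) (h : List V) : Set P := {i | ∀ u ∈ h, u ∉ T i}

end QGame

/-!
Start with `ρ`, and whenever a player leaves the current plan `p` after the history `h`,
switch to a play of `P_{α*}` after the new history that costs the deviator at least
`λ_i(hp)`. Such a play exists because `p` lies in `P_{α*} = P_{α*+1}`, so this deviation does not
eliminate it. Hence, along any play where one player deviates, that player's cost for the
currently promised play never decreases; once a finitely deviating strategy stops deviating,
the play coincides with the promised one, and the deviation was not profitable.
-/

namespace QGame

variable {P V : Type} (G : QGame P V)

lemma playPrefix_zero (ρ : ℕ → V) : playPrefix ρ 0 = [] := rfl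

lemma playPrefix_length (ρ : ℕ → V) (n : ℕ) : (playPrefix ρ n).length = n := by
  simp [playPrefix]

lemma playPrefix_succ (ρ : ℕ → V) (n : ℕ) :
    playPrefix ρ (n + 1) = playPrefix ρ n ++ [ρ n] := by
  simp only [playPrefix, List.ofFn_succ', List.concat_eq_append]
  simp

lemma playPrefix_succ_eq_cons (ρ : ℕ → V) (n : ℕ) :
    playPrefix ρ (n + 1) = ρ 0 :: playPrefix (fun k => ρ (k + 1)) n := by
  simp [playPrefix, List.ofFn_succ]

lemma prepend_nil (ρ : ℕ → V) : prepend [] ρ = ρ := by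
  funext n; simp [prepend]

lemma prepend_append_singleton_shift {h : List V} {ρ : ℕ → V} {u : V} (hρ : ρ 0 = u) :
    prepend (h ++ [u]) (fun n => ρ (n + 1)) = prepend h ρ := by
  funext m
  simp only [prepend, List.length_append, List.length_singleton, List.get_eq_getElem]
  rcases lt_trichotomy m h.length with hm | rfl | hm
  · simp [hm, List.getElem_append_left hm, show m < h.length + 1 by omega]
  · simp [hρ]
  · rw [dif_neg (by omega), dif_neg (by omega)]
    congr 1
    omega

lemma prepend_append_playPrefix_of_lt {h : List V} {ρ : ℕ → V} (ρ' : ℕ → V) {n m : ℕ}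
    (hm : m < h.length + n) : prepend (h ++ playPrefix ρ n) ρ' m = prepend h ρ m := by
  have hlen : m < (h ++ playPrefix ρ n).length := by simpa [playPrefix_length] using hm
  simp only [prepend, List.get_eq_getElem, dif_pos hlen]
  by_cases hh : m < h.length
  · simp [hh, List.getElem_append_left hh]
  · simp [hh, List.getElem_append_right (not_lt.mp hh), playPrefix]

section Pset

universe u

lemma Pset_zero : G.Pset (0 : Ordinal.{u}) = fun _ v => {ρ | G.IsPlay ρ ∧ ρ 0 = v} :=
  Ordinal.limitRecOn_zero _ _ _

lemma Pset_succ (α : Ordinal.{u}) :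
    G.Pset (α + 1) = fun h v => G.Pset α h v \ G.Eset (G.Pset α) h := by
  rw [Pset, Ordinal.limitRecOn_add_one]; rfl

lemma Pset_limit {α : Ordinal.{u}} (hα : Order.IsSuccLimit α) :
    G.Pset α = fun h v => ⋂ (β : Ordinal) (_ : β < α), G.Pset β h v := by
  rw [Pset, Ordinal.limitRecOn_limit _ _ _ _ hα]; rfl

lemma Pset_subset_plays (α : Ordinal.{u}) (h : List V) (v : V) :
    G.Pset α h v ⊆ {ρ | G.IsPlay ρ ∧ ρ 0 = v} := by
  induction α using Ordinal.limitRecOn with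
  | zero => rw [Pset_zero]
  | add_one β ih => rw [Pset_succ]; exact Set.sdiff_subset.trans ih
  | limit β hβ ih =>
      rw [Pset_limit G hβ]
      exact (Set.iInter₂_subset 0 hβ.bot_lt).trans (ih 0 hβ.bot_lt)

lemma shift_mem_Pset (α : Ordinal.{u}) {h : List V} {v : V} {ρ : ℕ → V}
    (hρ : ρ ∈ G.Pset α h v) : (fun n => ρ (n + 1)) ∈ G.Pset α (h ++ [v]) (ρ 1) := by
  induction α using Ordinal.limitRecOn generalizing h v ρ with
  | zero =>
      rw [Pset_zero] at hρ ⊢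
      exact ⟨fun n => hρ.1 (n + 1), rfl⟩
  | add_one β ih =>
      rw [Pset_succ] at hρ ⊢
      obtain ⟨hmem, hnE⟩ := hρ
      have hρ0 : ρ 0 = v := (G.Pset_subset_plays β h v hmem).2
      refine ⟨ih hmem, fun ⟨n, v', he, hne, hall⟩ => hnE ⟨n + 1, v', he, hne, ?_⟩⟩
      have hist : h ++ playPrefix ρ (n + 1 + 1) =
          (h ++ [v]) ++ playPrefix (fun k => ρ (k + 1)) (n + 1) := by
        rw [playPrefix_succ_eq_cons, hρ0, List.append_assoc, List.singleton_append]
      rw [hist, ← prepend_append_singleton_shift hρ0]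
      exact hall
  | limit β hβ ih =>
      rw [Pset_limit G hβ] at hρ ⊢
      simp only [Set.mem_iInter] at hρ ⊢
      exact fun γ hγ => ih γ hγ (hρ γ hγ)

end Pset

lemma exists_cost_le_of_notMem_Eset {S : List V → V → Set (ℕ → V)} {h : List V}
    {p : ℕ → V} {w : V} (hp : p ∉ G.Eset S h) (hw : G.E (p 0) w) (hw1 : w ≠ p 1) :
    ∃ p' ∈ S (h ++ [p 0]) w,
      G.cost (G.owner (p 0)) (prepend h p) ≤
        G.cost (G.owner (p 0)) (prepend (h ++ [p 0]) p') := by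
  by_contra hc
  push Not at hc
  exact hp ⟨0, w, hw, hw1, by simpa [playPrefix] using hc⟩

lemma isHist_append_singleton {v0 u v : V} {h : List V} :
    G.IsHist v0 (h ++ [u]) v ↔ G.IsHist v0 h u ∧ G.E u v := by
  change _ ∧ List.IsChain _ _ ↔ (_ ∧ List.IsChain _ _) ∧ _
  simp [List.isChain_append_cons_cons, and_assoc]

lemma outcomeAux_fst (π : Strat P V) (v : V) (n : ℕ) :
    (outcomeAux π v n).1 = playPrefix (outcome π v) n := by
  induction n with
  | zero => rfl
  | succ n ih => rw [playPrefix_succ, ← ih]; rfl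

lemma outcome_succ (π : Strat P V) (v : V) (n : ℕ) :
    outcome π v (n + 1) = π (playPrefix (outcome π v) n) (outcome π v n) := by
  rw [← outcomeAux_fst]; rfl

lemma isHist_outcome {v0 v : V} {h : List V} {π : Strat P V} (hπ : G.Valid π)
    (hh : G.IsHist v0 h v) (n : ℕ) :
    G.IsHist v0 (h ++ playPrefix (outcome π v) n) (outcome π v n) := by
  induction n with
  | zero => rwa [playPrefix_zero, List.append_nil]
  | succ n ih =>
      rw [playPrefix_succ, ← List.append_assoc, isHist_append_singleton, outcome_succ]
      exact ⟨ih, hπ _ _⟩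

lemma devProf_apply (σ τ : Strat P V) (i : P) (g : List V) (w : V) :
    G.devProf σ τ i g w = if G.owner w = i then τ g w else σ g w := rfl

variable {G} in
lemma Valid.devProf {σ τ : Strat P V} (hσ : G.Valid σ) (hτ : G.Valid τ) (i : P) :
    G.Valid (G.devProf σ τ i) := by
  intro g w
  rw [devProf_apply]
  split
  · exact hτ g w
  · exact hσ g w

lemma owner_eq_of_devProf_ne {σ τ : Strat P V} {i : P} {g : List V} {w : V}
    (hne : G.devProf σ τ i g w ≠ σ g w) : G.owner w = i := by
  by_contra ho
  exact hne (if_neg ho)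

lemma outcome_succ_of_notMem_devSteps {σ τ : Strat P V} {i : P} {v : V} {n : ℕ}
    (hn : n ∉ G.devSteps σ τ i v) :
    outcome (G.devProf σ τ i) v (n + 1) =
      σ (playPrefix (outcome (G.devProf σ τ i) v) n) (outcome (G.devProf σ τ i) v n) := by
  rw [outcome_succ, devProf_apply]
  split
  · next ho =>
      by_contra hne
      exact hn ⟨ho, by rw [outcomeAux_fst]; exact Ne.symm hne⟩
  · rfl

/-- A plan assigns to each history `(h, v)` the play from `v` that the players intend to
follow. -/
structure IsConsistentPlan (plan : List V → V → ℕ → V) : Prop where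
  apply_zero : ∀ h v, plan h v 0 = v
  append_apply_one : ∀ h u, plan (h ++ [u]) (plan h u 1) = fun n => plan h u (n + 1)

def followPlan (plan : List V → V → ℕ → V) : Strat P V := fun h v => plan h v 1

def IsPunishingPlan (v0 : V) (plan : List V → V → ℕ → V) : Prop :=
  ∀ h u w, G.IsHist v0 h u → G.E u w → w ≠ plan h u 1 →
    G.cost (G.owner u) (prepend h (plan h u)) ≤
      G.cost (G.owner u) (prepend (h ++ [u]) (plan (h ++ [u]) w))

def promisedPlay (plan : List V → V → ℕ → V) (h : List V) (ρ : ℕ → V) (n : ℕ) :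
    ℕ → V :=
  prepend (h ++ playPrefix ρ n) (plan (h ++ playPrefix ρ n) (ρ n))

lemma promisedPlay_zero (plan : List V → V → ℕ → V) (h : List V) (ρ : ℕ → V) :
    promisedPlay plan h ρ 0 = prepend h (plan h (ρ 0)) := by
  simp only [promisedPlay, playPrefix_zero, List.append_nil]

namespace IsConsistentPlan

variable {plan : List V → V → ℕ → V}

lemma promisedPlay_succ (hc : IsConsistentPlan plan) {h : List V} {ρ : ℕ → V} {n : ℕ}
    (hn : ρ (n + 1) = plan (h ++ playPrefix ρ n) (ρ n) 1) :
    promisedPlay plan h ρ (n + 1) = promisedPlay plan h ρ n := by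
  rw [promisedPlay, playPrefix_succ, ← List.append_assoc, hn, hc.append_apply_one,
    prepend_append_singleton_shift (hc.apply_zero _ _), promisedPlay]

lemma promisedPlay_apply_of_le (hc : IsConsistentPlan plan) {h : List V} {ρ : ℕ → V}
    {n m : ℕ} (hm : m ≤ h.length + n) : promisedPlay plan h ρ n m = prepend h ρ m := by
  rcases hm.lt_or_eq with hm | rfl
  · exact prepend_append_playPrefix_of_lt _ hm
  · simp [promisedPlay, prepend, playPrefix_length, hc.apply_zero]

lemma prepend_eq_promisedPlay (hc : IsConsistentPlan plan) {h : List V} {ρ : ℕ → V} {M : ℕ}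
    (hM : ∀ n ≥ M, ρ (n + 1) = plan (h ++ playPrefix ρ n) (ρ n) 1) :
    prepend h ρ = promisedPlay plan h ρ M := by
  have hconst : ∀ k, promisedPlay plan h ρ (M + k) = promisedPlay plan h ρ M := by
    intro k
    induction k with
    | zero => rfl
    | succ k ih => rw [← ih, ← add_assoc, hc.promisedPlay_succ (hM _ (by omega))]
  funext m
  rw [← hconst m, hc.promisedPlay_apply_of_le (by omega)]

lemma prepend_outcome_subStrat_followPlan (hc : IsConsistentPlan plan) (h : List V) (v : V) :
    prepend h (outcome (subStrat (followPlan plan : Strat P V) h) v) = prepend h (plan h v) := by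
  rw [hc.prepend_eq_promisedPlay (M := 0) fun n _ => outcome_succ _ _ n, promisedPlay_zero]
  rfl

lemma outcome_followPlan (hc : IsConsistentPlan plan) (v : V) :
    outcome (followPlan plan : Strat P V) v = plan [] v := by
  have h := hc.prepend_outcome_subStrat_followPlan (P := P) [] v
  rwa [prepend_nil, prepend_nil] at h

end IsConsistentPlan

variable {G} in
lemma IsPunishingPlan.monotone_cost_promisedPlay {v0 v : V} {h : List V}
    {plan : List V → V → ℕ → V} (hp : G.IsPunishingPlan v0 plan)
    (hc : IsConsistentPlan plan)
    {π : Strat P V} (hπ : G.Valid π) (hh : G.IsHist v0 h v) {i : P}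
    (hi : ∀ g w, π g w ≠ plan (h ++ g) w 1 → G.owner w = i) :
    Monotone fun n => G.cost i (promisedPlay plan h (outcome π v) n) := by
  refine monotone_nat_of_le_succ fun n => ?_
  set ρ := outcome π v
  by_cases hfollow : ρ (n + 1) = plan (h ++ playPrefix ρ n) (ρ n) 1
  · rw [hc.promisedPlay_succ hfollow]
  · have hmove : ρ (n + 1) = π (playPrefix ρ n) (ρ n) := outcome_succ π v n
    have hpun := hp (h ++ playPrefix ρ n) (ρ n) (ρ (n + 1)) (G.isHist_outcome hπ hh n)
      (hmove ▸ hπ _ _) hfollow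
    rw [hi _ _ (hmove ▸ hfollow)] at hpun
    simpa only [promisedPlay, playPrefix_succ, List.append_assoc] using hpun

variable {G} in
theorem IsConsistentPlan.isWeakSPE_followPlan {plan : List V → V → ℕ → V}
    (hc : IsConsistentPlan plan) {v0 : V} (hv : G.Valid (followPlan plan))
    (hp : G.IsPunishingPlan v0 plan) : G.IsWeakSPE v0 (followPlan plan) := by
  intro h v hh i τ hτ hfin
  set σ : Strat P V := subStrat (followPlan plan) h
  set ρ := outcome (G.devProf σ τ i) v
  obtain ⟨K, hK⟩ := hfin.bddAbove
  have hfollow : ∀ n ≥ K + 1, ρ (n + 1) = plan (h ++ playPrefix ρ n) (ρ n) 1 := fun n hn =>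
    G.outcome_succ_of_notMem_devSteps fun hd => by have := hK hd; omega
  have hσ : G.Valid σ := fun g w => hv (h ++ g) w
  have hmono := hp.monotone_cost_promisedPlay hc (hσ.devProf hτ i) hh
    fun _ _ => G.owner_eq_of_devProf_ne
  calc G.subCost h i (outcome σ v)
      = G.cost i (promisedPlay plan h ρ 0) := by
        rw [subCost, hc.prepend_outcome_subStrat_followPlan, promisedPlay_zero]; rfl
    _ ≤ G.cost i (promisedPlay plan h ρ (K + 1)) := hmono (Nat.zero_le _)
    _ = G.subCost h i ρ := by rw [subCost, hc.prepend_eq_promisedPlay hfollow]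

section PunishPlan

variable (S : List V → V → Set (ℕ → V))

def anyPlay (v : V) : ℕ → V := fun n => (fun w => (G.succ_exists w).choose)^[n] v

lemma anyPlay_mem_plays (v : V) : G.anyPlay v ∈ {p | G.IsPlay p ∧ p 0 = v} := by
  refine ⟨fun n => ?_, rfl⟩
  simp only [anyPlay, Function.iterate_succ_apply']
  exact (G.succ_exists _).choose_spec

def punishingPlay (h : List V) (w : V) (j : P) (b : EReal) : ℕ → V :=
  if hp : ∃ p ∈ S h w, b ≤ G.cost j (prepend h p) then hp.choose else G.anyPlay w

lemma punishingPlay_spec {h : List V} {w : V} {j : P} {b : EReal}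
    (hp : ∃ p ∈ S h w, b ≤ G.cost j (prepend h p)) :
    G.punishingPlay S h w j b ∈ S h w ∧
      b ≤ G.cost j (prepend h (G.punishingPlay S h w j b)) := by
  rw [punishingPlay, dif_pos hp]
  exact hp.choose_spec

lemma punishingPlay_mem_plays (hS : ∀ h v, S h v ⊆ {p | G.IsPlay p ∧ p 0 = v}) (h : List V)
    (w : V) (j : P) (b : EReal) : G.punishingPlay S h w j b ∈ {p | G.IsPlay p ∧ p 0 = w} := by
  unfold punishingPlay
  split
  · next hp => exact hS _ _ hp.choose_spec.1
  · exact G.anyPlay_mem_plays w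

/-- `punishPlan` on the reversed history, so that the recursion peels off the last vertex. -/
def punishPlanRev (v0 : V) (ρ : ℕ → V) : List V → V → ℕ → V
  | [], w => if w = v0 then ρ else G.anyPlay w
  | u :: rest, w =>
      if w = punishPlanRev v0 ρ rest u 1 then fun n => punishPlanRev v0 ρ rest u (n + 1)
      else G.punishingPlay S (rest.reverse ++ [u]) w (G.owner u)
        (G.cost (G.owner u) (prepend rest.reverse (punishPlanRev v0 ρ rest u)))

/-- Start with `ρ`; whenever the owner of `u` leaves the current plan `p` at `u`, switch to
a play of `S` that costs them at least as much as `p`. -/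
def punishPlan (v0 : V) (ρ : ℕ → V) (h : List V) (v : V) : ℕ → V :=
  G.punishPlanRev S v0 ρ h.reverse v

variable {v0 : V} {ρ : ℕ → V}

lemma punishPlan_nil (w : V) :
    G.punishPlan S v0 ρ [] w = if w = v0 then ρ else G.anyPlay w := rfl

lemma punishPlan_append (h : List V) (u w : V) :
    G.punishPlan S v0 ρ (h ++ [u]) w =
      if w = G.punishPlan S v0 ρ h u 1 then fun n => G.punishPlan S v0 ρ h u (n + 1)
      else G.punishingPlay S (h ++ [u]) w (G.owner u)
        (G.cost (G.owner u) (prepend h (G.punishPlan S v0 ρ h u))) := by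
  simp only [punishPlan, List.reverse_append, List.reverse_singleton, List.singleton_append,
    punishPlanRev, List.reverse_reverse]
  rfl

lemma punishPlan_mem_plays (hS : ∀ h v, S h v ⊆ {p | G.IsPlay p ∧ p 0 = v})
    (hρ : ρ ∈ {p | G.IsPlay p ∧ p 0 = v0}) (h : List V) (v : V) :
    G.punishPlan S v0 ρ h v ∈ {p | G.IsPlay p ∧ p 0 = v} := by
  induction h using List.reverseRecOn generalizing v with
  | nil =>
      rw [punishPlan_nil]
      split
      · next hv => exact hv ▸ hρ
      · exact G.anyPlay_mem_plays v
  | append_singleton h u ih =>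
      rw [punishPlan_append]
      split
      · next hv => exact ⟨fun n => (ih u).1 (n + 1), hv.symm⟩
      · exact G.punishingPlay_mem_plays S hS _ _ _ _

lemma isConsistentPlan_punishPlan (hS : ∀ h v, S h v ⊆ {p | G.IsPlay p ∧ p 0 = v})
    (hρ : ρ ∈ {p | G.IsPlay p ∧ p 0 = v0}) : IsConsistentPlan (G.punishPlan S v0 ρ) where
  apply_zero h v := (G.punishPlan_mem_plays S hS hρ h v).2
  append_apply_one h u := by rw [punishPlan_append, if_pos rfl]

lemma valid_followPlan_punishPlan (hS : ∀ h v, S h v ⊆ {p | G.IsPlay p ∧ p 0 = v})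
    (hρ : ρ ∈ {p | G.IsPlay p ∧ p 0 = v0}) : G.Valid (followPlan (G.punishPlan S v0 ρ)) := by
  intro h v
  obtain ⟨hplay, hstart⟩ := G.punishPlan_mem_plays S hS hρ h v
  have hstep := hplay 0
  rwa [hstart] at hstep

lemma punishPlan_append_of_ne (hS : ∀ h v, S h v ⊆ {p | G.IsPlay p ∧ p 0 = v})
    (hρ : ρ ∈ {p | G.IsPlay p ∧ p 0 = v0}) {h : List V} {u w : V}
    (hmem : G.punishPlan S v0 ρ h u ∈ S h u \ G.Eset S h) (huw : G.E u w)
    (hw : w ≠ G.punishPlan S v0 ρ h u 1) :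
    G.punishPlan S v0 ρ (h ++ [u]) w ∈ S (h ++ [u]) w ∧
      G.cost (G.owner u) (prepend h (G.punishPlan S v0 ρ h u)) ≤
        G.cost (G.owner u) (prepend (h ++ [u]) (G.punishPlan S v0 ρ (h ++ [u]) w)) := by
  have hstart := (G.isConsistentPlan_punishPlan S hS hρ).apply_zero h u
  have hex := G.exists_cost_le_of_notMem_Eset hmem.2 (hstart ▸ huw) (hstart ▸ hw)
  rw [hstart] at hex
  rw [punishPlan_append, if_neg hw]
  exact G.punishingPlay_spec S hex

lemma punishPlan_mem (hS : ∀ h v, S h v ⊆ {p | G.IsPlay p ∧ p 0 = v})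
    (hshift : ∀ h v, ∀ p ∈ S h v, (fun n => p (n + 1)) ∈ S (h ++ [v]) (p 1))
    (hstable : ∀ h v, G.IsHist v0 h v → Disjoint (S h v) (G.Eset S h))
    (hρ : ρ ∈ S [] v0) {h : List V} {v : V} (hh : G.IsHist v0 h v) :
    G.punishPlan S v0 ρ h v ∈ S h v := by
  induction h using List.reverseRecOn generalizing v with
  | nil =>
      have hv : v = v0 := by simpa [IsHist] using hh.1
      rw [punishPlan_nil, if_pos hv]
      exact hv ▸ hρ
  | append_singleton h u ih =>
      obtain ⟨hhu, huv⟩ := G.isHist_append_singleton.mp hh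
      have hmem := ih hhu
      by_cases hv : v = G.punishPlan S v0 ρ h u 1
      · rw [punishPlan_append, if_pos hv, hv]
        exact hshift _ _ _ hmem
      · refine (G.punishPlan_append_of_ne S hS (hS _ _ hρ) ⟨hmem, ?_⟩ huv hv).1
        exact Set.disjoint_left.mp (hstable h u hhu) hmem

lemma isPunishingPlan_punishPlan (hS : ∀ h v, S h v ⊆ {p | G.IsPlay p ∧ p 0 = v})
    (hshift : ∀ h v, ∀ p ∈ S h v, (fun n => p (n + 1)) ∈ S (h ++ [v]) (p 1))
    (hstable : ∀ h v, G.IsHist v0 h v → Disjoint (S h v) (G.Eset S h))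
    (hρ : ρ ∈ S [] v0) : G.IsPunishingPlan v0 (G.punishPlan S v0 ρ) := by
  intro h u w hh huw hw
  have hmem := G.punishPlan_mem S hS hshift hstable hρ hh
  exact (G.punishPlan_append_of_ne S hS (hS _ _ hρ)
    ⟨hmem, Set.disjoint_left.mp (hstable h u hh) hmem⟩ huw hw).2

theorem exists_weakSPE_of_disjoint_Eset (hS : ∀ h v, S h v ⊆ {p | G.IsPlay p ∧ p 0 = v})
    (hshift : ∀ h v, ∀ p ∈ S h v, (fun n => p (n + 1)) ∈ S (h ++ [v]) (p 1))
    (hstable : ∀ h v, G.IsHist v0 h v → Disjoint (S h v) (G.Eset S h))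
    (hρ : ρ ∈ S [] v0) :
    ∃ σ : Strat P V, G.Valid σ ∧ G.IsWeakSPE v0 σ ∧ outcome σ v0 = ρ := by
  have hc := G.isConsistentPlan_punishPlan S hS (hS _ _ hρ)
  have hvalid := G.valid_followPlan_punishPlan S hS (hS _ _ hρ)
  refine ⟨followPlan (G.punishPlan S v0 ρ), hvalid,
    hc.isWeakSPE_followPlan hvalid (G.isPunishingPlan_punishPlan S hS hshift hstable hρ), ?_⟩
  rw [hc.outcome_followPlan, punishPlan_nil, if_pos rfl]

end PunishPlan

end QGame

open QGame in
theorem Pset_nonempty_gives_weakSPE_general {P V : Type}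
    (G : QGame P V) (v0 : V) (αstar : Ordinal)
    (hfix : ∀ h v, G.IsHist v0 h v →
      G.Pset αstar h v = G.Pset (αstar + 1) h v) :
    ∀ ρ ∈ G.Pset αstar [] v0,
      ∃ σ : Strat P V, G.Valid σ ∧ G.IsWeakSPE v0 σ ∧ outcome σ v0 = ρ := by
  intro ρ hρ
  refine G.exists_weakSPE_of_disjoint_Eset (G.Pset αstar) (G.Pset_subset_plays αstar)
    (fun _ _ _ => G.shift_mem_Pset αstar) (fun h v hh => ?_) hρ
  rw [hfix h v hh, Pset_succ]
  exact Set.disjoint_sdiff_left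

open QGame in
/-- Completeness of the Folk characterization for weak
SPEs: if `α*` is a fixpoint of the elimination procedure and `P_{α*}(hv)` is
nonempty for every history `hv` of `(G, v0)`, then every play
`ρ ∈ P_{α*}(v0)` is the outcome of some weak SPE of `(G, v0)`. -/
theorem Pset_nonempty_gives_weakSPE {P V : Type} [Finite P] [Finite V]
    (G : QGame P V) (v0 : V) (αstar : Ordinal)
    (hfix : ∀ h v, G.IsHist v0 h v →
      G.Pset αstar h v = G.Pset (αstar + 1) h v)
    (hne : ∀ h v, G.IsHist v0 h v → (G.Pset αstar h v).Nonempty) :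
    ∀ ρ ∈ G.Pset αstar [] v0,
      ∃ σ : Strat P V, G.Valid σ ∧ G.IsWeakSPE v0 σ ∧ outcome σ v0 = ρ :=
  Pset_nonempty_gives_weakSPE_general G v0 αstar hfix
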